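/- arXiv:2101.00527 — 4 statements merged into one kernel-verified Lean document; each statement's English description precedes it below -/
import Mathlib

section
/- Let p, x ∈ S and v ∈ T_p with ‖v‖ ≤ π. If ρ(x, exp_p(tv)) ≤ π/2 for every t ∈ [0,1], then the function t ↦ ρ(x, exp_p(tv))² is convex on [0,1]; if moreover v ≠ 0 and ρ(x, exp_p(tv)) < π/2 for every t ∈ [0,1], this function is strictly convex on [0,1]. -/
open MeasureTheory ProbabilityTheory Filter
open scoped InnerProductSpace Topology BigOperators

noncomputable section

variable {H : Type*} [NormedAddCommGroup H] [InnerProductSpace ℝ H]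

/-- Geodesic distance `ρ(f,g) = arccos ⟨f,g⟩` on the unit sphere of `H`. -/
def rho (f g : H) : ℝ := Real.arccos ⟪f, g⟫_ℝ

/-- Riemannian exponential map `exp_p v = cos‖v‖ • p + (sin‖v‖/‖v‖) • v`
(with the convention `exp_p 0 = p`, since `sin 0 / 0 = 0` in Lean). -/
def expS (p v : H) : H := Real.cos ‖v‖ • p + (Real.sin ‖v‖ / ‖v‖) • v

/-- Logarithm map `log_p x = arccos⟨p,x⟩ • u/‖u‖` with `u = x − ⟨p,x⟩ • p`
(junk value `0` when `u = 0`, so `log_p p = 0`). -/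
def logS (p x : H) : H :=
  (Real.arccos ⟪p, x⟫_ℝ / ‖x - ⟪p, x⟫_ℝ • p‖) • (x - ⟪p, x⟫_ℝ • p)

/-- Tangent space `T_p = {v ∈ H : ⟨v,p⟩ = 0}`, a closed subspace of `H`. -/
def Tp (p : H) : Submodule ℝ H := (ℝ ∙ p)ᗮ

instance (p : H) [CompleteSpace H] : CompleteSpace (Tp p) :=
  (Submodule.isClosed_orthogonal _).completeSpace_coe

lemma logS_mem_Tp (p x : H) (hp : ‖p‖ = 1) : logS p x ∈ Tp p := by
  have h0 : ⟪p, x - ⟪p, x⟫_ℝ • p⟫_ℝ = 0 := by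
    rw [inner_sub_right, real_inner_smul_right, real_inner_self_eq_norm_sq, hp]
    ring
  rw [Tp, Submodule.mem_orthogonal_singleton_iff_inner_right, logS,
    real_inner_smul_right, h0, mul_zero]

/-- The logarithm map as a tangent-space-valued map. -/
def logT (p x : H) (hp : ‖p‖ = 1) : Tp p := ⟨logS p x, logS_mem_Tp p x hp⟩

/-- `g_x(v) = ρ(x, exp_p v)²` defined on the tangent space `T_p`. -/
def gfun (p x : H) : Tp p → ℝ := fun v => rho x (expS p (v : H)) ^ 2

/-!
Put `a = ⟪x, p⟫`, `b = ⟪x, v / ‖v‖⟫` and `s = ‖v‖`. Along the geodesic,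
`⟪x, exp_p (t v)⟫ = a cos (s t) + b sin (s t) =: c t`, and `a² + b² ≤ 1` by Bessel's inequality.
If `a² + b² < 1`, then `θ = arccos ∘ c` satisfies `θ'' = s² (1 - a² - b²) c / (1 - c²)^(3/2)`,
which is `≥ 0` exactly where `θ ≤ π/2` (and `> 0` where `θ < π/2`, if `s > 0`); so `θ` is
(strictly) convex, and so is `θ²` as `θ ≥ 0`.
If `a² + b² = 1`, then `x` lies on the great circle through `p` in direction `v`,
`c t = cos (s t - φ)` and `θ t = |s t - φ|`, so `θ²` is a quadratic polynomial in `t`.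
-/

open Real Set

lemma StrictConvexOn.sq {D : Set ℝ} {f : ℝ → ℝ} (hf : StrictConvexOn ℝ D f)
    (hf₀ : ∀ t ∈ D, 0 ≤ f t) : StrictConvexOn ℝ D (fun t ↦ f t ^ 2) := by
  refine ⟨hf.1, fun x hx y hy hxy α β hα hβ hαβ ↦ ?_⟩
  calc f (α • x + β • y) ^ 2 < (α • f x + β • f y) ^ 2 :=
        pow_lt_pow_left₀ (hf.2 hx hy hxy hα hβ hαβ) (hf₀ _ (hf.1 hx hy hα.le hβ.le hαβ)) two_ne_zero
    _ ≤ α • f x ^ 2 + β • f y ^ 2 := (convexOn_pow 2).2 (hf₀ x hx) (hf₀ y hy) hα.le hβ.le hαβ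

lemma convexOn_sq_mul_sub (s φ : ℝ) : ConvexOn ℝ univ (fun t ↦ (s * t - φ) ^ 2) := by
  refine ⟨convex_univ, fun x _ y _ α β hα hβ hαβ ↦ ?_⟩
  obtain rfl : β = 1 - α := by linarith
  simp only [smul_eq_mul]
  nlinarith [mul_nonneg (mul_nonneg hα hβ) (sq_nonneg (s * (x - y)))]

lemma strictConvexOn_sq_mul_sub {s : ℝ} (hs : s ≠ 0) (φ : ℝ) :
    StrictConvexOn ℝ univ (fun t ↦ (s * t - φ) ^ 2) := by
  refine ⟨convex_univ, fun x _ y _ hxy α β hα hβ hαβ ↦ ?_⟩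
  have : 0 < α * β * (s * (x - y)) ^ 2 := by
    have := sub_ne_zero.2 hxy
    positivity
  obtain rfl : β = 1 - α := by linarith
  simp only [smul_eq_mul]
  nlinarith

lemma arccos_cos_sq {θ : ℝ} (h₁ : -π ≤ θ) (h₂ : θ ≤ π) : arccos (cos θ) ^ 2 = θ ^ 2 := by
  rw [← cos_abs, arccos_cos (abs_nonneg θ) (abs_le.2 ⟨h₁, h₂⟩), sq_abs]

section Sinusoid

variable (a b s : ℝ)

def sinusoid (t : ℝ) : ℝ := a * cos (s * t) + b * sin (s * t)

lemma sinusoid_sq_add_sinusoid_sq (t : ℝ) :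
    sinusoid a b s t ^ 2 + sinusoid b (-a) s t ^ 2 = a ^ 2 + b ^ 2 := by
  simp only [sinusoid]
  linear_combination (a ^ 2 + b ^ 2) * sin_sq_add_cos_sq (s * t)

lemma hasDerivAt_sinusoid (t : ℝ) :
    HasDerivAt (sinusoid a b s) (s * sinusoid b (-a) s t) t := by
  have hst : HasDerivAt (s * ·) s t := by simpa using (hasDerivAt_id t).const_mul s
  refine ((((hasDerivAt_cos _).comp t hst).const_mul a).add
    (((hasDerivAt_sin _).comp t hst).const_mul b)).congr_deriv ?_
  simp only [sinusoid]
  ring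

variable {a b s}

lemma sinusoid_sq_lt_one (hr : a ^ 2 + b ^ 2 < 1) (t : ℝ) : sinusoid a b s t ^ 2 < 1 := by
  nlinarith [sinusoid_sq_add_sinusoid_sq a b s t]

lemma hasDerivAt_arccos_sinusoid (hr : a ^ 2 + b ^ 2 < 1) (t : ℝ) :
    HasDerivAt (fun t ↦ arccos (sinusoid a b s t))
      (-(s * sinusoid b (-a) s t) / √(1 - sinusoid a b s t ^ 2)) t := by
  obtain ⟨hlo, hhi⟩ := abs_lt.1 ((sq_lt_one_iff_abs_lt_one _).1 (sinusoid_sq_lt_one hr t))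
  refine ((hasDerivAt_arccos hlo.ne' hhi.ne).comp t (hasDerivAt_sinusoid a b s t)).congr_deriv ?_
  ring

lemma hasDerivAt_deriv_arccos_sinusoid (hr : a ^ 2 + b ^ 2 < 1) (t : ℝ) :
    HasDerivAt (fun t ↦ -(s * sinusoid b (-a) s t) / √(1 - sinusoid a b s t ^ 2))
      (s ^ 2 * (1 - (a ^ 2 + b ^ 2)) * sinusoid a b s t / √(1 - sinusoid a b s t ^ 2) ^ 3) t := by
  have hpos : 0 < 1 - sinusoid a b s t ^ 2 := sub_pos.2 (sinusoid_sq_lt_one hr t)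
  have hW : √(1 - sinusoid a b s t ^ 2) ^ 2 = 1 - sinusoid a b s t ^ 2 := sq_sqrt hpos.le
  have hneg : sinusoid (-a) (-b) s t = -sinusoid a b s t := by simp only [sinusoid]; ring
  have hWd := (hasDerivAt_sqrt hpos.ne').comp t (((hasDerivAt_sinusoid a b s t).pow 2).const_sub 1)
  have hNd := ((hasDerivAt_sinusoid b (-a) s t).const_mul s).neg
  refine (hNd.div hWd (sqrt_pos.2 hpos).ne').congr_deriv ?_
  simp only [Function.comp_apply, Pi.pow_apply, Pi.neg_apply, hneg]
  field_simp
  rw [hW, ← sinusoid_sq_add_sinusoid_sq a b s t]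
  ring

lemma convexOn_arccos_sinusoid {D : Set ℝ} (hD : Convex ℝ D) (hr : a ^ 2 + b ^ 2 < 1)
    (hc : ∀ t ∈ D, 0 ≤ sinusoid a b s t) :
    ConvexOn ℝ D (fun t ↦ arccos (sinusoid a b s t)) := by
  refine convexOn_of_hasDerivWithinAt2_nonneg hD
    (fun t _ ↦ (hasDerivAt_arccos_sinusoid hr t).continuousAt.continuousWithinAt)
    (fun t _ ↦ (hasDerivAt_arccos_sinusoid hr t).hasDerivWithinAt)
    (fun t _ ↦ (hasDerivAt_deriv_arccos_sinusoid hr t).hasDerivWithinAt) fun t ht ↦ ?_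
  have hct := hc t (interior_subset ht)
  have hr' : 0 ≤ 1 - (a ^ 2 + b ^ 2) := by linarith
  positivity

lemma strictConvexOn_arccos_sinusoid {D : Set ℝ} (hD : Convex ℝ D) (hr : a ^ 2 + b ^ 2 < 1)
    (hs : s ≠ 0) (hc : ∀ t ∈ D, 0 < sinusoid a b s t) :
    StrictConvexOn ℝ D (fun t ↦ arccos (sinusoid a b s t)) := by
  refine strictConvexOn_of_deriv2_pos hD
    (fun t _ ↦ (hasDerivAt_arccos_sinusoid hr t).continuousAt.continuousWithinAt) fun t ht ↦ ?_
  rw [Function.iterate_succ_apply, Function.iterate_one,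
    funext fun t ↦ (hasDerivAt_arccos_sinusoid (s := s) hr t).deriv,
    (hasDerivAt_deriv_arccos_sinusoid hr t).deriv]
  have hpos : 0 < 1 - sinusoid a b s t ^ 2 := sub_pos.2 (sinusoid_sq_lt_one hr t)
  have hct := hc t (interior_subset ht)
  have hr' : 0 < 1 - (a ^ 2 + b ^ 2) := by linarith
  positivity

lemma sinusoid_eq_cos_sub_arcsin (ha : 0 ≤ a) (hr : a ^ 2 + b ^ 2 = 1) (t : ℝ) :
    sinusoid a b s t = cos (s * t - arcsin b) := by
  have hcos : cos (arcsin b) = a := by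
    rw [cos_arcsin, show 1 - b ^ 2 = a ^ 2 by linarith, sqrt_sq ha]
  rw [cos_sub, hcos, sin_arcsin (by nlinarith) (by nlinarith), sinusoid]
  ring

lemma arccos_sinusoid_sq_eqOn (hs : 0 ≤ s) (hr : a ^ 2 + b ^ 2 = 1)
    (hc : ∀ t ∈ Icc (0 : ℝ) 1, 0 ≤ sinusoid a b s t) :
    EqOn (fun t ↦ arccos (sinusoid a b s t) ^ 2) (fun t ↦ (s * t - arcsin b) ^ 2) (Icc 0 1) := by
  have ha : 0 ≤ a := by simpa [sinusoid] using hc 0 (left_mem_Icc.2 zero_le_one)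
  have hcos := sinusoid_eq_cos_sub_arcsin (s := s) ha hr
  have hφ := arcsin_le_pi_div_two b
  have hφ' := neg_pi_div_two_le_arcsin b
  intro t ht
  have hlow : -π ≤ s * t - arcsin b := by nlinarith [pi_pos, mul_nonneg hs ht.1]
  simp only [hcos]
  refine arccos_cos_sq hlow ?_
  by_contra! hgt
  -- the angle `s * u - arcsin b` starts in `[-π/2, π/2]`, so it passes `π`, where `cos = -1`
  obtain ⟨u, hu, hπ : s * u - arcsin b = π⟩ : π ∈ (fun u ↦ s * u - arcsin b) '' Icc 0 t :=
    intermediate_value_Icc ht.1 (by fun_prop) ⟨by linarith [pi_pos], hgt.le⟩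
  have hcu := hc u ⟨hu.1, hu.2.trans ht.2⟩
  rw [hcos, hπ, cos_pi] at hcu
  norm_num at hcu

lemma convexOn_arccos_sinusoid_sq (hs : 0 ≤ s) (hr : a ^ 2 + b ^ 2 ≤ 1)
    (hc : ∀ t ∈ Icc (0 : ℝ) 1, 0 ≤ sinusoid a b s t) :
    ConvexOn ℝ (Icc 0 1) (fun t ↦ arccos (sinusoid a b s t) ^ 2) := by
  rcases hr.lt_or_eq with hr | hr
  · exact (convexOn_arccos_sinusoid (convex_Icc 0 1) hr hc).pow (fun t _ ↦ arccos_nonneg _) 2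
  · exact ((convexOn_sq_mul_sub s _).subset (subset_univ _) (convex_Icc 0 1)).congr
      (arccos_sinusoid_sq_eqOn hs hr hc).symm

lemma strictConvexOn_arccos_sinusoid_sq (hs : 0 < s) (hr : a ^ 2 + b ^ 2 ≤ 1)
    (hc : ∀ t ∈ Icc (0 : ℝ) 1, 0 < sinusoid a b s t) :
    StrictConvexOn ℝ (Icc 0 1) (fun t ↦ arccos (sinusoid a b s t) ^ 2) := by
  rcases hr.lt_or_eq with hr | hr
  · exact (strictConvexOn_arccos_sinusoid (convex_Icc 0 1) hr hs.ne' hc).sq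
      (fun t _ ↦ arccos_nonneg _)
  · exact ((strictConvexOn_sq_mul_sub hs.ne' _).subset (subset_univ _) (convex_Icc 0 1)).congr
      (arccos_sinusoid_sq_eqOn hs.le hr fun t ht ↦ (hc t ht).le).symm

end Sinusoid

lemma expS_smul (p v : H) (t : ℝ) :
    expS p (t • v) = cos (‖v‖ * t) • p + sin (‖v‖ * t) • (‖v‖⁻¹ • v) := by
  rcases eq_or_ne v 0 with rfl | hv
  · simp [expS]
  rcases eq_or_ne t 0 with rfl | ht
  · simp [expS]
  have hv' := norm_ne_zero_iff.2 hv
  have hcos : cos (|t| * ‖v‖) = cos (‖v‖ * t) := by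
    rw [← cos_abs (‖v‖ * t), abs_mul, abs_norm, mul_comm]
  have hsin : sin (|t| * ‖v‖) / (|t| * ‖v‖) * t = sin (‖v‖ * t) * ‖v‖⁻¹ := by
    rcases abs_cases t with ⟨h, -⟩ | ⟨h, -⟩
    · rw [h]; field_simp
    · rw [h, neg_mul, sin_neg]; field_simp
  rw [expS, norm_smul, norm_eq_abs, smul_smul, smul_smul, hcos, hsin]

lemma inner_expS_smul (p v x : H) (t : ℝ) :
    ⟪x, expS p (t • v)⟫_ℝ = sinusoid ⟪x, p⟫_ℝ ⟪x, ‖v‖⁻¹ • v⟫_ℝ ‖v‖ t := by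
  rw [expS_smul, inner_add_right, real_inner_smul_right, real_inner_smul_right, sinusoid]
  ring

lemma sq_inner_add_sq_inner_normalize_le {p v : H} (hp : ‖p‖ = 1) (hv : ⟪v, p⟫_ℝ = 0) (x : H) :
    ⟪x, p⟫_ℝ ^ 2 + ⟪x, ‖v‖⁻¹ • v⟫_ℝ ^ 2 ≤ ‖x‖ ^ 2 := by
  rcases eq_or_ne v 0 with rfl | hv0
  · simpa [hp, sq_abs] using pow_le_pow_left₀ (abs_nonneg _) (abs_real_inner_le_norm x p) 2
  have hON : Orthonormal ℝ ![p, ‖v‖⁻¹ • v] := by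
    rw [orthonormal_iff_ite]
    have hu : ‖‖v‖⁻¹ • v‖ = 1 := norm_smul_inv_norm hv0
    have hpv : ⟪p, v⟫_ℝ = 0 := real_inner_comm p v ▸ hv
    intro i j
    fin_cases i <;> fin_cases j <;>
      simp [hp, hu, real_inner_smul_left, real_inner_smul_right, hv, hpv]
  simpa [Fin.sum_univ_two, real_inner_comm] using hON.sum_inner_products_le x (s := Finset.univ)

theorem sq_dist_convex_along_geodesic_general (p x v : H) (hp : ‖p‖ = 1) (hx : ‖x‖ = 1)
    (hv : ⟪v, p⟫_ℝ = 0) :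
    ((∀ t ∈ Set.Icc (0 : ℝ) 1, rho x (expS p (t • v)) ≤ Real.pi / 2) →
      ConvexOn ℝ (Set.Icc (0 : ℝ) 1) (fun t : ℝ => rho x (expS p (t • v)) ^ 2)) ∧
    (v ≠ 0 → (∀ t ∈ Set.Icc (0 : ℝ) 1, rho x (expS p (t • v)) < Real.pi / 2) →
      StrictConvexOn ℝ (Set.Icc (0 : ℝ) 1) (fun t : ℝ => rho x (expS p (t • v)) ^ 2)) := by
  have hrho (t : ℝ) :
      rho x (expS p (t • v)) = arccos (sinusoid ⟪x, p⟫_ℝ ⟪x, ‖v‖⁻¹ • v⟫_ℝ ‖v‖ t) := by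
    rw [rho, inner_expS_smul]
  have hr := sq_inner_add_sq_inner_normalize_le hp hv x
  rw [hx, one_pow] at hr
  simp only [hrho]
  exact ⟨fun h ↦ convexOn_arccos_sinusoid_sq (norm_nonneg v) hr
      fun t ht ↦ arccos_le_pi_div_two.1 (h t ht),
    fun hv0 h ↦ strictConvexOn_arccos_sinusoid_sq (norm_pos_iff.2 hv0) hr
      fun t ht ↦ arccos_lt_pi_div_two.1 (h t ht)⟩

/-- convexity of `t ↦ ρ(x, exp_p(tv))²` along geodesics within a
quarter-circle neighborhood, and strict convexity inside. -/
theorem sq_dist_convex_along_geodesic (p x v : H) (hp : ‖p‖ = 1) (hx : ‖x‖ = 1)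
    (hv : ⟪v, p⟫_ℝ = 0) (hvπ : ‖v‖ ≤ Real.pi) :
    ((∀ t ∈ Set.Icc (0 : ℝ) 1, rho x (expS p (t • v)) ≤ Real.pi / 2) →
      ConvexOn ℝ (Set.Icc (0 : ℝ) 1) (fun t : ℝ => rho x (expS p (t • v)) ^ 2)) ∧
    (v ≠ 0 → (∀ t ∈ Set.Icc (0 : ℝ) 1, rho x (expS p (t • v)) < Real.pi / 2) →
      StrictConvexOn ℝ (Set.Icc (0 : ℝ) 1) (fun t : ℝ => rho x (expS p (t • v)) ^ 2)) :=
  sq_dist_convex_along_geodesic_general p x v hp hx hv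
end
end

section
/- Assume (A1). Then there exists a unique minimizer μ ∈ S of the Fréchet functional M(p) = E[ρ(X,p)²]; that is, the Fréchet (intrinsic) mean of X on S exists and is unique. -/
open MeasureTheory ProbabilityTheory Filter
open scoped InnerProductSpace Topology BigOperators

noncomputable section

variable {H : Type*} [NormedAddCommGroup H] [InnerProductSpace ℝ H]

/-!
On the unit sphere `ρ(x, p)² = arccos ⟨x, p⟩²`, and `arccos²` is convex on `[-1, 1]` with
`arccos² t + 2t` decreasing. Hence, if `p, q` are unit vectors with `⟨X, p⟩, ⟨X, q⟩ ≥ 0` a.s.,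
their normalised midpoint `w` satisfies
`M(w) ≤ (M(p) + M(q))/2 - (2 - ‖p + q‖)/2 · E⟨X, p + q⟩`, and `2 - ‖p + q‖ ≥ ‖p - q‖²/4`.
The infimum of `M` over these vectors is below `π²/4` (witnessed by a point of `U` in the support
of the law of `X`), and `M(p) ≥ π²/4 - π²/2 · E⟨X, p⟩`, so `E⟨X, p⟩` stays bounded away from `0`
near the infimum; minimising sequences are therefore Cauchy and the minimiser is unique.
Finally, by (A1), projecting any unit `p` onto the dual cone of `U` and renormalising increases
every `⟨X, p⟩`, hence does not increase `M`; this reduces the problem to the vectors above.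
-/

open Real Set

namespace Real

lemma mul_cos_le_sin {θ : ℝ} (h₀ : 0 ≤ θ) (hπ : θ ≤ π) : θ * cos θ ≤ sin θ := by
  rcases lt_or_ge θ (π / 2) with h | h
  · have hcos : 0 < cos θ := cos_pos_of_mem_Ioo ⟨by linarith, h⟩
    have := le_tan h₀ h
    rwa [tan_eq_sin_div_cos, le_div_iff₀ hcos] at this
  · have hcos : cos θ ≤ 0 := cos_nonpos_of_pi_div_two_le_of_le h (by linarith)
    nlinarith [sin_nonneg_of_nonneg_of_le_pi h₀ hπ]

lemma monotoneOn_div_sin : MonotoneOn (fun θ => θ / sin θ) (Ioo 0 π) := by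
  have hderiv : ∀ θ ∈ Ioo 0 π,
      HasDerivAt (fun θ => θ / sin θ) ((1 * sin θ - θ * cos θ) / sin θ ^ 2) θ :=
    fun θ hθ => (hasDerivAt_id θ).div (hasDerivAt_sin θ) (sin_pos_of_pos_of_lt_pi hθ.1 hθ.2).ne'
  refine monotoneOn_of_deriv_nonneg (convex_Ioo 0 π)
    (fun θ hθ => (hderiv θ hθ).continuousAt.continuousWithinAt) ?_ ?_ <;> rw [interior_Ioo]
  · exact fun θ hθ => (hderiv θ hθ).differentiableAt.differentiableWithinAt
  · intro θ hθ
    rw [(hderiv θ hθ).deriv]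
    exact div_nonneg (by linarith [mul_cos_le_sin hθ.1.le hθ.2.le]) (sq_nonneg _)

lemma antitoneOn_arccos_div_sqrt :
    AntitoneOn (fun t => arccos t / √(1 - t ^ 2)) (Ioo (-1) 1) := by
  intro s hs t ht hst
  simp only [← sin_arccos]
  exact monotoneOn_div_sin ⟨arccos_pos.2 ht.2, arccos_lt_pi.2 ht.1⟩
    ⟨arccos_pos.2 hs.2, arccos_lt_pi.2 hs.1⟩ (antitone_arccos hst)

lemma one_le_arccos_div_sqrt {t : ℝ} (ht : t ∈ Ioo (-1) 1) : 1 ≤ arccos t / √(1 - t ^ 2) := by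
  rw [← sin_arccos, one_le_div (sin_pos_of_pos_of_lt_pi (arccos_pos.2 ht.2) (arccos_lt_pi.2 ht.1))]
  exact sin_le (arccos_nonneg t)

lemma hasDerivAt_arccos_sq {t : ℝ} (ht : t ∈ Ioo (-1) 1) :
    HasDerivAt (fun t => arccos t ^ 2) (-2 * (arccos t / √(1 - t ^ 2))) t := by
  refine ((hasDerivAt_arccos ht.1.ne' ht.2.ne).fun_pow 2).congr_deriv ?_
  push_cast
  ring

lemma convexOn_arccos_sq : ConvexOn ℝ (Icc (-1) 1) (fun t => arccos t ^ 2) := by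
  refine MonotoneOn.convexOn_of_deriv (convex_Icc _ _) (continuous_arccos.pow 2).continuousOn ?_ ?_
    <;> rw [interior_Icc]
  · exact fun t ht => (hasDerivAt_arccos_sq ht).differentiableAt.differentiableWithinAt
  · intro s hs t ht hst
    rw [(hasDerivAt_arccos_sq hs).deriv, (hasDerivAt_arccos_sq ht).deriv]
    linarith [antitoneOn_arccos_div_sqrt hs ht hst]

lemma antitoneOn_arccos_sq_add_two_mul :
    AntitoneOn (fun t => arccos t ^ 2 + 2 * t) (Icc (-1) 1) := by
  have hderiv : ∀ t ∈ Ioo (-1 : ℝ) 1, HasDerivAt (fun t => arccos t ^ 2 + 2 * t)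
      (-2 * (arccos t / √(1 - t ^ 2)) + 2 * 1) t :=
    fun t ht => (hasDerivAt_arccos_sq ht).add ((hasDerivAt_id t).const_mul 2)
  refine antitoneOn_of_deriv_nonpos (convex_Icc _ _) (by fun_prop) ?_ ?_ <;> rw [interior_Icc]
  · exact fun t ht => (hderiv t ht).differentiableAt.differentiableWithinAt
  · intro t ht
    rw [(hderiv t ht).deriv]
    linarith [one_le_arccos_div_sqrt ht]

lemma antitone_arccos_sq : Antitone fun t => arccos t ^ 2 :=
  fun _ _ h => pow_le_pow_left₀ (arccos_nonneg _) (antitone_arccos h) 2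

lemma pi_sq_div_four_sub_le_arccos_sq {t : ℝ} (h₀ : 0 ≤ t) (h₁ : t ≤ 1) :
    π ^ 2 / 4 - π ^ 2 / 2 * t ≤ arccos t ^ 2 := by
  have hs₀ : 0 ≤ arcsin t := arcsin_nonneg.2 h₀
  -- Jordan's inequality `2 s / π ≤ sin s` at `s = arcsin t`
  have hjordan := mul_le_sin hs₀ (arcsin_le_pi_div_two t)
  rw [sin_arcsin (by linarith) h₁, div_mul_eq_mul_div, div_le_iff₀ pi_pos] at hjordan
  rw [arccos_eq_pi_div_two_sub_arcsin]
  nlinarith [pi_pos]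

lemma arccos_sq_le_of_midpoint_le {a b t : ℝ} (ha : a ∈ Icc (-1) 1) (hb : b ∈ Icc (-1) 1)
    (ht : (a + b) / 2 ≤ t) (ht₁ : t ≤ 1) :
    arccos t ^ 2 ≤ (arccos a ^ 2 + arccos b ^ 2) / 2 - 2 * (t - (a + b) / 2) := by
  have hmid : (a + b) / 2 ∈ Icc (-1 : ℝ) 1 := ⟨by linarith [ha.1, hb.1], by linarith [ha.2, hb.2]⟩
  have hslope := antitoneOn_arccos_sq_add_two_mul hmid ⟨by linarith [hmid.1], ht₁⟩ ht
  have hconv := convexOn_arccos_sq.2 ha hb (by norm_num : (0 : ℝ) ≤ 1 / 2)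
    (by norm_num : (0 : ℝ) ≤ 1 / 2) (by norm_num)
  simp only [smul_eq_mul] at hslope hconv
  rw [show 1 / 2 * a + 1 / 2 * b = (a + b) / 2 by ring] at hconv
  linarith

end Real

theorem exists_unique_isMinOn_of_midpoint_le {E : Type*} [MetricSpace E] [CompleteSpace E]
    {s : Set E} {F : E → ℝ} {ℓ κ : ℝ} (hs : IsClosed s) (hF : ContinuousOn F s)
    (hbdd : BddBelow (F '' s)) (hℓ : ∃ c ∈ s, F c < ℓ) (hκ : 0 < κ)
    (hmid : ∀ p ∈ s, ∀ q ∈ s, F p < ℓ → F q < ℓ →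
      ∃ w ∈ s, F w ≤ (F p + F q) / 2 - κ * dist p q ^ 2) :
    ∃! μ, μ ∈ s ∧ IsMinOn F s μ := by
  obtain ⟨c, hcs, hcℓ⟩ := hℓ
  set m := sInf (F '' s)
  have hm : ∀ p ∈ s, m ≤ F p := fun p hp => csInf_le hbdd (mem_image_of_mem F hp)
  have hmℓ : m < ℓ := (hm c hcs).trans_lt hcℓ
  have hdist : ∀ δ, m + δ < ℓ → ∀ p ∈ s, ∀ q ∈ s, F p ≤ m + δ → F q ≤ m + δ →
      κ * dist p q ^ 2 ≤ δ := by
    intro δ hδ p hp q hq hFp hFq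
    obtain ⟨w, hw, hFw⟩ := hmid p hp q hq (by linarith) (by linarith)
    linarith [hm w hw]
  obtain ⟨u, hu_anti, hu_lim, hu_mem⟩ := exists_seq_tendsto_sInf ⟨F c, mem_image_of_mem F hcs⟩ hbdd
  choose q hqs hqF using hu_mem
  obtain rfl : u = fun n => F (q n) := funext fun n => (hqF n).symm
  have hcauchy : CauchySeq q := by
    refine Metric.cauchySeq_iff'.2 fun ε hε => ?_
    obtain ⟨N, hNℓ, hNε⟩ := ((hu_lim.eventually (gt_mem_nhds hmℓ)).and
      (hu_lim.eventually (gt_mem_nhds (lt_add_of_pos_right m (mul_pos hκ (pow_pos hε 2)))))).exists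
    refine ⟨N, fun n hn => ?_⟩
    have := hdist (F (q N) - m) (by linarith) (q n) (hqs n) (q N) (hqs N)
      (by linarith [hu_anti hn]) (by linarith)
    exact lt_of_pow_lt_pow_left₀ 2 hε.le (lt_of_mul_lt_mul_left (by linarith) hκ.le)
  obtain ⟨μ, hμ⟩ := cauchySeq_tendsto_of_complete hcauchy
  have hμs : μ ∈ s := hs.mem_of_tendsto hμ (Eventually.of_forall hqs)
  have hFμ : F μ = m := by
    refine tendsto_nhds_unique ?_ hu_lim
    exact (hF μ hμs).tendsto.comp (tendsto_nhdsWithin_iff.2 ⟨hμ, Eventually.of_forall hqs⟩)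
  refine ⟨μ, ⟨hμs, fun p hp => hFμ ▸ hm p hp⟩, fun ν ⟨hνs, hνmin⟩ => ?_⟩
  have := hdist 0 (by linarith) ν hνs μ hμs (by linarith [isMinOn_iff.1 hνmin μ hμs]) (by linarith)
  by_contra hne
  linarith [mul_pos hκ (pow_pos (dist_pos.2 hne) 2)]

theorem ProperCone.exists_norm_le_forall_inner_le [CompleteSpace H] (C : ProperCone ℝ H) (p : H) :
    ∃ v ∈ C, ‖v‖ ≤ ‖p‖ ∧ ∀ w ∈ C, ⟪w, p⟫_ℝ ≤ ⟪w, v⟫_ℝ := by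
  obtain ⟨v, hvC, hv⟩ := exists_norm_eq_iInf_of_complete_convex C.nonempty
    C.isClosed.isComplete C.convex p
  -- the variational inequality of the nearest point, tested at `0` and at `v + w`
  have hvar := (norm_eq_iInf_iff_real_inner_le_zero C.convex hvC).1 hv
  refine ⟨v, hvC, ?_, fun w hw => ?_⟩
  · have h0 := hvar 0 C.zero_mem
    rw [zero_sub, inner_neg_right, inner_sub_left, real_inner_self_eq_norm_sq] at h0
    nlinarith [real_inner_le_norm p v, norm_nonneg p, norm_nonneg v]
  · have h1 := hvar (v + w) (C.add_mem hvC hw)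
    rw [add_sub_cancel_left, real_inner_comm, inner_sub_right] at h1
    linarith

lemma inner_mem_Icc_of_norm_le_one {x y : H} (hx : ‖x‖ ≤ 1) (hy : ‖y‖ ≤ 1) :
    ⟪x, y⟫_ℝ ∈ Icc (-1) 1 := by
  have h := abs_real_inner_le_norm x y
  have : ‖x‖ * ‖y‖ ≤ 1 := mul_le_one₀ hx (norm_nonneg y) hy
  exact abs_le.1 (h.trans this)

lemma norm_sub_sq_le_four_mul_two_sub_norm_add {p q : H} (hp : ‖p‖ = 1) (hq : ‖q‖ = 1) :
    ‖p - q‖ ^ 2 ≤ 4 * (2 - ‖p + q‖) := by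
  have hpar := parallelogram_law_with_norm ℝ p q
  have hle : ‖p + q‖ ≤ 2 := by linarith [norm_add_le p q]
  rw [hp, hq] at hpar
  nlinarith [norm_nonneg (p + q)]

lemma rho_sq_le_pi_sq (x p : H) : rho x p ^ 2 ≤ π ^ 2 :=
  pow_le_pow_left₀ (arccos_nonneg _) (arccos_le_pi _) 2

lemma rho_sq_normalize_add_le {x p q : H} (hx : ‖x‖ = 1) (hp : ‖p‖ = 1) (hq : ‖q‖ = 1)
    (hxp : 0 ≤ ⟪x, p⟫_ℝ) (hxq : 0 ≤ ⟪x, q⟫_ℝ) (hpq : p + q ≠ 0) :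
    rho x (‖p + q‖⁻¹ • (p + q)) ^ 2 ≤
      (rho x p ^ 2 + rho x q ^ 2) / 2 - (2 - ‖p + q‖) / 2 * ⟪x, p + q⟫_ℝ := by
  have hc : 0 < ‖p + q‖ := norm_pos_iff.2 hpq
  have hc₂ : ‖p + q‖ ≤ 2 := by linarith [norm_add_le p q]
  have hw : ‖‖p + q‖⁻¹ • (p + q)‖ = 1 := norm_smul_inv_norm hpq
  have ht₁ := (inner_mem_Icc_of_norm_le_one hx.le hw.le).2
  rw [real_inner_smul_right, inner_add_right] at ht₁
  unfold rho
  rw [real_inner_smul_right, inner_add_right]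
  set a := ⟪x, p⟫_ℝ
  set b := ⟪x, q⟫_ℝ
  set c := ‖p + q‖
  have hmid : (a + b) / 2 ≤ c⁻¹ * (a + b) := by
    rw [inv_mul_eq_div]
    exact div_le_div_of_nonneg_left (by linarith) hc hc₂
  have h := arccos_sq_le_of_midpoint_le (inner_mem_Icc_of_norm_le_one hx.le hp.le)
    (inner_mem_Icc_of_norm_le_one hx.le hq.le) hmid ht₁
  have hgap : (2 - c) / 2 * (a + b) ≤ 2 * (c⁻¹ * (a + b) - (a + b) / 2) := by
    have : 2 * (c⁻¹ * (a + b) - (a + b) / 2) - (2 - c) / 2 * (a + b)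
        = (2 - c) ^ 2 * (a + b) / (2 * c) := by field_simp
    have : 0 ≤ (2 - c) ^ 2 * (a + b) / (2 * c) := by positivity
    linarith
  linarith

section FrechetFunctional

variable {Ω : Type*} [MeasurableSpace Ω] (P : Measure Ω) (X : Ω → H)

def frechetFun (p : H) : ℝ := ∫ ω, rho (X ω) p ^ 2 ∂P

def acuteSphere : Set H := Metric.sphere 0 1 ∩ {v | ∀ᵐ ω ∂P, 0 ≤ ⟪X ω, v⟫_ℝ}

variable {P X}

lemma mem_acuteSphere {v : H} :
    v ∈ acuteSphere P X ↔ ‖v‖ = 1 ∧ ∀ᵐ ω ∂P, 0 ≤ ⟪X ω, v⟫_ℝ := by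
  rw [acuteSphere, mem_inter_iff, mem_sphere_zero_iff_norm, mem_ofPred_eq]

lemma isClosed_acuteSphere : IsClosed (acuteSphere P X) := by
  refine Metric.isClosed_sphere.inter (isClosed_of_closure_subset fun v hv => ?_)
  obtain ⟨u, hu, hlim⟩ := mem_closure_iff_seq_limit.1 hv
  filter_upwards [ae_all_iff.2 hu] with ω hω
  exact ge_of_tendsto' (tendsto_const_nhds.inner hlim) hω

lemma normalize_add_mem_acuteSphere {p q : H} (hp : p ∈ acuteSphere P X)
    (hq : q ∈ acuteSphere P X) (hpq : p + q ≠ 0) : ‖p + q‖⁻¹ • (p + q) ∈ acuteSphere P X := by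
  refine mem_acuteSphere.2 ⟨norm_smul_inv_norm hpq, ?_⟩
  filter_upwards [(mem_acuteSphere.1 hp).2, (mem_acuteSphere.1 hq).2] with ω hωp hωq
  rw [real_inner_smul_right, inner_add_right]
  positivity

lemma frechetFun_nonneg (p : H) : 0 ≤ frechetFun P X p :=
  integral_nonneg fun _ => sq_nonneg _

variable [IsProbabilityMeasure P]

lemma frechetFun_zero : frechetFun P X 0 = π ^ 2 / 4 := by
  simp [frechetFun, rho, div_pow]
  ring

variable [MeasurableSpace H] [OpensMeasurableSpace H]

lemma integrable_rho_sq (hX : Measurable X) (p : H) :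
    Integrable (fun ω => rho (X ω) p ^ 2) P := by
  refine Integrable.of_bound ?_ (π ^ 2) (Eventually.of_forall fun ω => ?_)
  · exact ((continuous_arccos.comp (continuous_id.inner continuous_const)).pow 2).measurable.comp
      hX |>.aestronglyMeasurable
  · rw [Real.norm_of_nonneg (sq_nonneg _)]
    exact rho_sq_le_pi_sq _ _

lemma integrable_inner (hX : Measurable X) (hXS : ∀ ω, ‖X ω‖ = 1) (p : H) :
    Integrable (fun ω => ⟪X ω, p⟫_ℝ) P := by
  refine Integrable.of_bound ((continuous_id.inner continuous_const).measurable.comp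
    hX |>.aestronglyMeasurable) ‖p‖ (Eventually.of_forall fun ω => ?_)
  simpa [hXS ω] using abs_real_inner_le_norm (X ω) p

lemma continuous_frechetFun (hX : Measurable X) : Continuous (frechetFun P X) := by
  refine continuous_of_dominated (bound := fun _ => π ^ 2)
    (fun p => (integrable_rho_sq hX p).aestronglyMeasurable) (fun p => ?_)
    (integrable_const _) (Eventually.of_forall fun ω => ?_)
  · refine Eventually.of_forall fun ω => ?_
    rw [Real.norm_of_nonneg (sq_nonneg _)]
    exact rho_sq_le_pi_sq _ _
  · exact (continuous_arccos.comp (continuous_const.inner continuous_id)).pow 2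

lemma frechetFun_le_of_ae_inner_le (hX : Measurable X) {p q : H}
    (h : ∀ᵐ ω ∂P, ⟪X ω, p⟫_ℝ ≤ ⟪X ω, q⟫_ℝ) : frechetFun P X q ≤ frechetFun P X p :=
  integral_mono_ae (integrable_rho_sq hX q) (integrable_rho_sq hX p) <|
    h.mono fun _ hω => antitone_arccos_sq hω

lemma ae_inner_eq_of_frechetFun_eq (hX : Measurable X) (hXS : ∀ ω, ‖X ω‖ = 1) {p q : H}
    (hp : ‖p‖ ≤ 1) (hq : ‖q‖ ≤ 1) (h : ∀ᵐ ω ∂P, ⟪X ω, p⟫_ℝ ≤ ⟪X ω, q⟫_ℝ)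
    (heq : frechetFun P X q = frechetFun P X p) : ∀ᵐ ω ∂P, ⟪X ω, p⟫_ℝ = ⟪X ω, q⟫_ℝ := by
  have hae := (integral_eq_iff_of_ae_le (integrable_rho_sq hX q) (integrable_rho_sq hX p) <|
    h.mono fun _ hω => antitone_arccos_sq hω).1 heq
  filter_upwards [hae] with ω hω
  refine (arccos_injOn (inner_mem_Icc_of_norm_le_one (hXS ω).le hq)
    (inner_mem_Icc_of_norm_le_one (hXS ω).le hp) ?_).symm
  exact (pow_left_inj₀ (arccos_nonneg _) (arccos_nonneg _) two_ne_zero).1 hω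

lemma frechetFun_lt_pi_sq_div_four (hX : Measurable X) (hXS : ∀ ω, ‖X ω‖ = 1) {c : H}
    (hc : ∀ᵐ ω ∂P, 0 ≤ ⟪X ω, c⟫_ℝ) (hc₁ : ‖c‖ ≤ 1) (hpos : P {ω | 0 < ⟪X ω, c⟫_ℝ} ≠ 0) :
    frechetFun P X c < π ^ 2 / 4 := by
  have h0 : ∀ᵐ ω ∂P, ⟪X ω, 0⟫_ℝ ≤ ⟪X ω, c⟫_ℝ := by simpa using hc
  refine frechetFun_zero (P := P) (X := X) ▸
    (frechetFun_le_of_ae_inner_le hX h0).lt_of_ne fun heq => hpos ?_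
  refine measure_mono_null (fun ω hω => ?_) (ae_iff.1
    (ae_inner_eq_of_frechetFun_eq hX hXS (by simp) hc₁ h0 heq))
  simp only [mem_ofPred_eq, inner_zero_right] at hω ⊢
  exact hω.ne

lemma pi_sq_div_four_sub_le_frechetFun (hX : Measurable X) (hXS : ∀ ω, ‖X ω‖ = 1) {p : H}
    (hp : ∀ᵐ ω ∂P, 0 ≤ ⟪X ω, p⟫_ℝ) (hp₁ : ‖p‖ ≤ 1) :
    π ^ 2 / 4 - π ^ 2 / 2 * ∫ ω, ⟪X ω, p⟫_ℝ ∂P ≤ frechetFun P X p := by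
  have hint : Integrable (fun ω => ⟪X ω, p⟫_ℝ) P := integrable_inner hX hXS p
  have hconst : Integrable (fun _ => π ^ 2 / 4) P := integrable_const _
  calc π ^ 2 / 4 - π ^ 2 / 2 * ∫ ω, ⟪X ω, p⟫_ℝ ∂P
      = ∫ ω, (π ^ 2 / 4 - π ^ 2 / 2 * ⟪X ω, p⟫_ℝ) ∂P := by
        rw [integral_sub hconst (hint.const_mul _), integral_const_mul]
        simp
    _ ≤ frechetFun P X p := integral_mono_ae (hconst.sub (hint.const_mul _))
        (integrable_rho_sq hX p) <| hp.mono fun ω hω =>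
          pi_sq_div_four_sub_le_arccos_sq hω (inner_mem_Icc_of_norm_le_one (hXS ω).le hp₁).2

lemma frechetFun_normalize_add_le (hX : Measurable X) (hXS : ∀ ω, ‖X ω‖ = 1) {p q : H}
    (hp : p ∈ acuteSphere P X) (hq : q ∈ acuteSphere P X) (hpq : p + q ≠ 0) :
    frechetFun P X (‖p + q‖⁻¹ • (p + q)) ≤ (frechetFun P X p + frechetFun P X q) / 2 -
      (2 - ‖p + q‖) / 2 * ∫ ω, ⟪X ω, p + q⟫_ℝ ∂P := by
  have hint : Integrable (fun ω => ⟪X ω, p + q⟫_ℝ) P := integrable_inner hX hXS _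
  have hmean : Integrable (fun ω => (rho (X ω) p ^ 2 + rho (X ω) q ^ 2) / 2) P :=
    ((integrable_rho_sq hX p).add (integrable_rho_sq hX q)).div_const 2
  calc frechetFun P X (‖p + q‖⁻¹ • (p + q))
      ≤ ∫ ω, ((rho (X ω) p ^ 2 + rho (X ω) q ^ 2) / 2 - (2 - ‖p + q‖) / 2 * ⟪X ω, p + q⟫_ℝ) ∂P :=
        integral_mono_ae (integrable_rho_sq hX _)
          (hmean.sub (hint.const_mul _)) <| by
          filter_upwards [(mem_acuteSphere.1 hp).2, (mem_acuteSphere.1 hq).2] with ω hωp hωq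
          exact rho_sq_normalize_add_le (hXS ω) (mem_acuteSphere.1 hp).1 (mem_acuteSphere.1 hq).1
            hωp hωq hpq
    _ = _ := by
        rw [integral_sub hmean (hint.const_mul _), integral_div,
          integral_add (integrable_rho_sq hX p) (integrable_rho_sq hX q), integral_const_mul]
        rfl

lemma exists_mem_measure_inner_pos [TopologicalSpace.SeparableSpace H] (hX : Measurable X)
    (hXS : ∀ ω, ‖X ω‖ = 1) {U : Set H} (hXU : ∀ᵐ ω ∂P, X ω ∈ U) :
    ∃ c ∈ U, ‖c‖ = 1 ∧ P {ω | 0 < ⟪X ω, c⟫_ℝ} ≠ 0 := by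
  have hsupp : ∀ᵐ ω ∂P, X ω ∈ (P.map X).support :=
    ae_of_ae_map hX.aemeasurable Measure.support_mem_ae
  obtain ⟨ω, hωU, hωs⟩ := (hXU.and hsupp).exists
  have hopen : IsOpen {x : H | 0 < ⟪x, X ω⟫_ℝ} :=
    isOpen_lt continuous_const (continuous_id.inner continuous_const)
  have hpos := (Measure.mem_support_iff_forall _).1 hωs _ (hopen.mem_nhds (by simp [hXS ω]))
  rw [Measure.map_apply hX hopen.measurableSet] at hpos
  exact ⟨X ω, hωU, hXS ω, hpos.ne'⟩

variable [CompleteSpace H]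

lemma exists_unique_isMinOn_frechetFun (hX : Measurable X) (hXS : ∀ ω, ‖X ω‖ = 1) {c : H}
    (hc : c ∈ acuteSphere P X) (hFc : frechetFun P X c < π ^ 2 / 4) :
    ∃! μ, μ ∈ acuteSphere P X ∧ IsMinOn (frechetFun P X) (acuteSphere P X) μ := by
  set δ := (π ^ 2 / 4 - frechetFun P X c) / π ^ 2 with hδ_def
  have hδ : 0 < δ := div_pos (by linarith) (by positivity)
  have hmean : ∀ p ∈ acuteSphere P X,
      frechetFun P X p < (π ^ 2 / 4 + frechetFun P X c) / 2 → δ < ∫ ω, ⟪X ω, p⟫_ℝ ∂P := by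
    intro p hp hFp
    have hlow := pi_sq_div_four_sub_le_frechetFun hX hXS (mem_acuteSphere.1 hp).2
      (mem_acuteSphere.1 hp).1.le
    rw [hδ_def, div_lt_iff₀ (by positivity)]
    nlinarith
  refine exists_unique_isMinOn_of_midpoint_le isClosed_acuteSphere
    (continuous_frechetFun hX).continuousOn ⟨0, forall_mem_image.2 fun p _ => frechetFun_nonneg p⟩
    ⟨c, hc, by linarith⟩ (ℓ := (π ^ 2 / 4 + frechetFun P X c) / 2) (κ := δ / 4)
    (by positivity) fun p hp q hq hFp hFq => ?_
  have hB : ∫ ω, ⟪X ω, p + q⟫_ℝ ∂P = (∫ ω, ⟪X ω, p⟫_ℝ ∂P) + ∫ ω, ⟪X ω, q⟫_ℝ ∂P := by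
    simp only [inner_add_right]
    exact integral_add (integrable_inner hX hXS p) (integrable_inner hX hXS q)
  have hBpq : 2 * δ < ∫ ω, ⟪X ω, p + q⟫_ℝ ∂P := by
    linarith [hmean p hp hFp, hmean q hq hFq]
  have hpq : p + q ≠ 0 := by
    rintro h
    simp only [h, inner_zero_right, integral_zero] at hBpq
    linarith
  refine ⟨_, normalize_add_mem_acuteSphere hp hq hpq, ?_⟩
  have hmid := frechetFun_normalize_add_le hX hXS hp hq hpq
  have hsep := norm_sub_sq_le_four_mul_two_sub_norm_add (mem_acuteSphere.1 hp).1
    (mem_acuteSphere.1 hq).1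
  rw [dist_eq_norm]
  nlinarith [sq_nonneg ‖p - q‖]

lemma exists_mem_frechetFun_le (hX : Measurable X) (hXS : ∀ ω, ‖X ω‖ = 1) {U : Set H}
    (hXU : ∀ᵐ ω ∂P, X ω ∈ U) (hU : ∀ x ∈ U, ∀ y ∈ U, 0 ≤ ⟪x, y⟫_ℝ) {c : H}
    (hc : c ∈ acuteSphere P X) (hFc : frechetFun P X c < π ^ 2 / 4) {p : H} (hp : ‖p‖ = 1) :
    ∃ p' ∈ acuteSphere P X, frechetFun P X p' ≤ frechetFun P X p ∧
      (frechetFun P X p' = frechetFun P X p → ∀ᵐ ω ∂P, 0 ≤ ⟪X ω, p⟫_ℝ) := by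
  obtain ⟨v, hvU, hvp, hv⟩ := (ProperCone.innerDual U).exists_norm_le_forall_inner_le p
  have hpv : ∀ᵐ ω ∂P, ⟪X ω, p⟫_ℝ ≤ ⟪X ω, v⟫_ℝ :=
    hXU.mono fun ω hω => hv _ (ProperCone.mem_innerDual.2 fun y hy => hU y hy _ hω)
  have hv₀ : ∀ᵐ ω ∂P, 0 ≤ ⟪X ω, v⟫_ℝ := hXU.mono fun ω hω => hvU hω
  rcases eq_or_ne v 0 with rfl | hv_ne
  · have hF0 := frechetFun_le_of_ae_inner_le (q := 0) hX (by simpa using hpv)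
    rw [frechetFun_zero] at hF0
    exact ⟨c, hc, by linarith, fun h => by linarith⟩
  set p' := ‖v‖⁻¹ • v
  have hp'₁ : ‖p'‖ = 1 := norm_smul_inv_norm hv_ne
  have hp'₀ : ∀ᵐ ω ∂P, 0 ≤ ⟪X ω, p'⟫_ℝ :=
    hv₀.mono fun ω hω => by rw [real_inner_smul_right]; positivity
  have hpp' : ∀ᵐ ω ∂P, ⟪X ω, p⟫_ℝ ≤ ⟪X ω, p'⟫_ℝ := by
    filter_upwards [hpv, hv₀] with ω h₁ h₂
    rw [real_inner_smul_right]
    exact h₁.trans (le_mul_of_one_le_left h₂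
      ((one_le_inv₀ (norm_pos_iff.2 hv_ne)).2 (hvp.trans hp.le)))
  refine ⟨p', mem_acuteSphere.2 ⟨hp'₁, hp'₀⟩, frechetFun_le_of_ae_inner_le hX hpp', fun heq => ?_⟩
  filter_upwards [ae_inner_eq_of_frechetFun_eq hX hXS hp.le hp'₁.le hpp' heq, hp'₀] with ω h₁ h₂
  linarith

end FrechetFunctional

theorem frechet_mean_exists_unique_general [CompleteSpace H] [TopologicalSpace.SeparableSpace H]
    [MeasurableSpace H] [BorelSpace H]
    {Ω : Type*} [MeasurableSpace Ω] (P : Measure Ω) [IsProbabilityMeasure P]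
    (X : Ω → H) (hX : Measurable X) (hXS : ∀ ω, ‖X ω‖ = 1)
    -- Assumption (A1)
    (U : Set H) (hXU : ∀ᵐ ω ∂P, X ω ∈ U)
    (hUd : ∀ x ∈ U, ∀ y ∈ U, rho x y ≤ Real.pi / 2) :
    ∃! μ : H, ‖μ‖ = 1 ∧ ∀ p : H, ‖p‖ = 1 →
      (∫ ω, rho (X ω) μ ^ 2 ∂P) ≤ ∫ ω, rho (X ω) p ^ 2 ∂P := by
  have hU : ∀ x ∈ U, ∀ y ∈ U, 0 ≤ ⟪x, y⟫_ℝ := fun x hx y hy =>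
    arccos_le_pi_div_two.1 (hUd x hx y hy)
  obtain ⟨c, hcU, hc₁, hc_pos⟩ := exists_mem_measure_inner_pos hX hXS hXU
  have hc : ∀ᵐ ω ∂P, 0 ≤ ⟪X ω, c⟫_ℝ := hXU.mono fun ω hω => hU _ hω c hcU
  have hFc := frechetFun_lt_pi_sq_div_four hX hXS hc hc₁.le hc_pos
  have hcS : c ∈ acuteSphere P X := mem_acuteSphere.2 ⟨hc₁, hc⟩
  obtain ⟨μ, ⟨hμS, hμ_min⟩, hμ_unique⟩ := exists_unique_isMinOn_frechetFun hX hXS hcS hFc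
  have hμ_global : ∀ p : H, ‖p‖ = 1 → frechetFun P X μ ≤ frechetFun P X p := fun p hp => by
    obtain ⟨p', hp'S, hle, -⟩ := exists_mem_frechetFun_le hX hXS hXU hU hcS hFc hp
    exact (isMinOn_iff.1 hμ_min p' hp'S).trans hle
  refine ⟨μ, ⟨(mem_acuteSphere.1 hμS).1, hμ_global⟩, fun ν ⟨hν₁, hν_min⟩ => hμ_unique ν ⟨?_,
    isMinOn_iff.2 fun p hp => hν_min p (mem_acuteSphere.1 hp).1⟩⟩
  obtain ⟨p', hp'S, hle, heq⟩ := exists_mem_frechetFun_le hX hXS hXU hU hcS hFc hν₁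
  exact mem_acuteSphere.2 ⟨hν₁, heq (le_antisymm hle (hν_min p' (mem_acuteSphere.1 hp'S).1))⟩

/-- under (A1) the Fréchet mean exists and is unique. -/
theorem frechet_mean_exists_unique [CompleteSpace H] [TopologicalSpace.SeparableSpace H]
    [MeasurableSpace H] [BorelSpace H]
    {Ω : Type*} [MeasurableSpace Ω] (P : Measure Ω) [IsProbabilityMeasure P]
    (X : Ω → H) (hX : Measurable X) (hXS : ∀ ω, ‖X ω‖ = 1)
    -- Assumption (A1)
    (U : Set H) (hUS : ∀ x ∈ U, ‖x‖ = 1) (hXU : ∀ᵐ ω ∂P, X ω ∈ U)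
    (hUd : ∀ x ∈ U, ∀ y ∈ U, rho x y ≤ Real.pi / 2) :
    ∃! μ : H, ‖μ‖ = 1 ∧ ∀ p : H, ‖p‖ = 1 →
      (∫ ω, rho (X ω) μ ^ 2 ∂P) ≤ ∫ ω, rho (X ω) p ^ 2 ∂P :=
  frechet_mean_exists_unique_general P X hX hXS U hXU hUd
end
end

section
/- Let p, x ∈ S with ρ(x, p) < π, and define g_x : T_p → ℝ by g_x(v) = ρ(x, exp_p v)². Then g_x is Fréchet differentiable at 0 and its derivative is Dg_x(0)(w) = −2⟨log_p x, w⟩ for w ∈ T_p. -/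
open MeasureTheory ProbabilityTheory Filter
open scoped InnerProductSpace Topology BigOperators

noncomputable section

variable {H : Type*} [NormedAddCommGroup H] [InnerProductSpace ℝ H]

/-!
Since `cos t = 1 + O(t²)` and `sin t = t + O(t³)`, `exp_p v = p + v + O(‖v‖²)`, so
`v ↦ ⟪x, exp_p v⟫` has derivative `⟪x, ·⟫` at `0`. If `a = ⟪p, x⟫ ∈ (-1, 1)`, the chain rule
through `arccos²` gives the derivative `-2 arccos a / √(1 - a²) • ⟪x, ·⟫`, and on `T_p` this is
`-2 ⟪log_p x, ·⟫` because `log_p x` is the component of `x` orthogonal to `p`, of norm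
`√(1 - a²)`, rescaled by `arccos a / √(1 - a²)`. If `x = p`, `arccos²` is not differentiable
at `1`, but `g_p v = ‖v‖²` for `‖v‖ ≤ π`, whose derivative at `0` vanishes, as does `log_p p`.
-/

open Asymptotics Real

lemma norm_expS_sub_sub_le (p v : H) :
    ‖expS p v - p - v‖ ≤ ‖p‖ / 2 * ‖v‖ ^ 2 + ‖v‖ ^ 3 / 6 := by
  have hcos : |cos ‖v‖ - 1| ≤ ‖v‖ ^ 2 / 2 := by
    rw [abs_sub_comm, abs_of_nonneg (sub_nonneg.2 (cos_le_one _))]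
    linarith [one_sub_sq_div_two_le_cos (x := ‖v‖)]
  have hsin : ‖(sin ‖v‖ / ‖v‖) • v - v‖ ≤ ‖v‖ ^ 3 / 6 := by
    rcases eq_or_ne v 0 with rfl | hv
    · simp
    have hv' : 0 < ‖v‖ := norm_pos_iff.2 hv
    calc ‖(sin ‖v‖ / ‖v‖) • v - v‖ = ‖(sin ‖v‖ / ‖v‖ - 1) • v‖ := by rw [sub_smul, one_smul]
      _ = |(sin ‖v‖ / ‖v‖ - 1) * ‖v‖| := by rw [norm_smul, abs_mul, abs_norm, Real.norm_eq_abs]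
      _ = |‖v‖ - sin ‖v‖| := by rw [sub_mul, div_mul_cancel₀ _ hv'.ne', one_mul, abs_sub_comm]
      _ ≤ ‖v‖ ^ 3 / 6 := by simpa using abs_sub_sin_le ‖v‖
  calc ‖expS p v - p - v‖ = ‖(cos ‖v‖ - 1) • p + ((sin ‖v‖ / ‖v‖) • v - v)‖ := by
        rw [expS, sub_smul, one_smul]; abel_nf
    _ ≤ |cos ‖v‖ - 1| * ‖p‖ + ‖v‖ ^ 3 / 6 := by
        grw [norm_add_le, norm_smul, Real.norm_eq_abs, hsin]
    _ ≤ ‖p‖ / 2 * ‖v‖ ^ 2 + ‖v‖ ^ 3 / 6 := by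
        grw [hcos]; linarith

lemma hasFDerivAt_expS_zero (p : H) : HasFDerivAt (expS p) (ContinuousLinearMap.id ℝ H) 0 := by
  rw [hasFDerivAt_iff_isLittleO_nhds_zero]
  refine IsBigO.trans_isLittleO ?_ (isLittleO_norm_pow_id one_lt_two)
  refine IsBigO.of_bound (‖p‖ / 2 + 1 / 6) ?_
  filter_upwards [Metric.closedBall_mem_nhds (0 : H) one_pos] with v hv
  rw [mem_closedBall_zero_iff] at hv
  have hv3 : ‖v‖ ^ 3 ≤ ‖v‖ ^ 2 := pow_le_pow_of_le_one (norm_nonneg v) hv (by norm_num)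
  simp only [zero_add, expS, norm_zero, cos_zero, sin_zero, div_zero, one_smul, smul_zero,
    add_zero, ContinuousLinearMap.id_apply, norm_pow, norm_norm]
  calc _ ≤ ‖p‖ / 2 * ‖v‖ ^ 2 + ‖v‖ ^ 3 / 6 := norm_expS_sub_sub_le p v
    _ ≤ (‖p‖ / 2 + 1 / 6) * ‖v‖ ^ 2 := by linarith

lemma hasFDerivAt_inner_expS_zero (p x : H) :
    HasFDerivAt (fun v : Tp p => ⟪x, expS p v⟫_ℝ) ((innerSL ℝ x).comp (Tp p).subtypeL) 0 := by
  have hexp : HasFDerivAt (expS p) (ContinuousLinearMap.id ℝ H) ((Tp p).subtypeL 0) := by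
    simpa using hasFDerivAt_expS_zero p
  have h := (innerSL ℝ x).hasFDerivAt.comp (0 : Tp p)
    (hexp.comp (0 : Tp p) (Tp p).subtypeL.hasFDerivAt)
  rwa [ContinuousLinearMap.id_comp] at h

lemma inner_expS_of_mem_Tp {p v : H} (hp : ‖p‖ = 1) (hv : v ∈ Tp p) :
    ⟪p, expS p v⟫_ℝ = cos ‖v‖ := by
  rw [Tp, Submodule.mem_orthogonal_singleton_iff_inner_right] at hv
  simp [expS, inner_add_right, real_inner_smul_right, hp, hv]

lemma gfun_self_eq_norm_sq {p : H} (hp : ‖p‖ = 1) {v : Tp p} (hv : ‖v‖ ≤ π) :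
    gfun p p v = ‖v‖ ^ 2 := by
  rw [gfun, rho, inner_expS_of_mem_Tp hp v.2, Submodule.norm_coe,
    arccos_cos (norm_nonneg _) hv]

lemma norm_sub_inner_smul_eq_sqrt {p x : H} (hp : ‖p‖ = 1) (hx : ‖x‖ = 1) :
    ‖x - ⟪p, x⟫_ℝ • p‖ = √(1 - ⟪p, x⟫_ℝ ^ 2) := by
  rw [← sqrt_sq (norm_nonneg _), norm_sub_sq_real, real_inner_smul_right, norm_smul, hx, hp,
    Real.norm_eq_abs, mul_one, sq_abs, real_inner_comm]
  ring_nf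

lemma innerSL_logS_comp_subtypeL {p x : H} (hp : ‖p‖ = 1) (hx : ‖x‖ = 1) :
    (innerSL ℝ (logS p x)).comp (Tp p).subtypeL =
      (arccos ⟪p, x⟫_ℝ / √(1 - ⟪p, x⟫_ℝ ^ 2)) • (innerSL ℝ x).comp (Tp p).subtypeL := by
  ext ⟨w, hw⟩
  rw [Tp, Submodule.mem_orthogonal_singleton_iff_inner_right] at hw
  simp only [ContinuousLinearMap.comp_apply, Submodule.coe_subtypeL, Submodule.subtype_apply,
    coe_innerSL_apply, smul_apply, smul_eq_mul]
  rw [logS, norm_sub_inner_smul_eq_sqrt hp hx, real_inner_smul_left, inner_sub_left,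
    real_inner_smul_left, hw, mul_zero, sub_zero]

theorem gfun_hasFDerivAt_zero_general (p x : H) (hp : ‖p‖ = 1) (hx : ‖x‖ = 1)
    (hd : rho x p < Real.pi) :
    HasFDerivAt (gfun p x)
      ((-2 : ℝ) • ((innerSL ℝ (logS p x)).comp (Tp p).subtypeL)) 0 := by
  have hgt : -1 < ⟪p, x⟫_ℝ := by rwa [rho, arccos_lt_pi, real_inner_comm] at hd
  have hle : ⟪p, x⟫_ℝ ≤ 1 := by simpa [hp, hx] using real_inner_le_norm p x
  rcases hle.eq_or_lt with h1 | h1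
  · obtain rfl : x = p := ((inner_eq_one_iff_of_norm_eq_one hp hx).1 h1).symm
    have hlog : logS x x = 0 := by rw [logS, h1, one_smul, sub_self, smul_zero]
    have hsq : HasFDerivAt (fun v : Tp x => ‖v‖ ^ 2) (0 : Tp x →L[ℝ] ℝ) 0 := by
      simpa using (hasStrictFDerivAt_norm_sq (0 : Tp x)).hasFDerivAt
    rw [hlog, map_zero, ContinuousLinearMap.zero_comp, smul_zero]
    refine hsq.congr_of_eventuallyEq ?_
    filter_upwards [Metric.closedBall_mem_nhds (0 : Tp x) pi_pos] with v hv
    exact gfun_self_eq_norm_sq hp (mem_closedBall_zero_iff.1 hv)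
  · have harccos := (hasDerivAt_arccos hgt.ne' h1.ne).pow 2
    have hinner := hasFDerivAt_inner_expS_zero p x
    have h0 : ⟪p, x⟫_ℝ = ⟪x, expS p ((0 : Tp p) : H)⟫_ℝ := by simp [expS, real_inner_comm]
    rw [innerSL_logS_comp_subtypeL hp hx, smul_smul]
    have hcoeff : (2 : ℕ) * arccos ⟪p, x⟫_ℝ ^ (2 - 1) * -(1 / √(1 - ⟪p, x⟫_ℝ ^ 2)) =
        -2 * (arccos ⟪p, x⟫_ℝ / √(1 - ⟪p, x⟫_ℝ ^ 2)) := by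
      push_cast; ring
    rw [← hcoeff]
    exact harccos.comp_hasFDerivAt_of_eq (0 : Tp p) hinner h0

/-- `g_x(v) = ρ(x, exp_p v)²` is Fréchet differentiable at `0` with
derivative `w ↦ −2⟨log_p x, w⟩`. -/
theorem gfun_hasFDerivAt_zero [CompleteSpace H] (p x : H) (hp : ‖p‖ = 1) (hx : ‖x‖ = 1)
    (hd : rho x p < Real.pi) :
    HasFDerivAt (gfun p x)
      ((-2 : ℝ) • ((innerSL ℝ (logS p x)).comp (Tp p).subtypeL)) 0 :=
  gfun_hasFDerivAt_zero_general p x hp hx hd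
end
end

section
/- Let p, x ∈ S. The map v ↦ ρ(x, exp_p v)² from T_p to ℝ is twice continuously Fréchet differentiable on the open set {v ∈ T_p : ‖v‖ < π and exp_p v ≠ −x}. -/
/-! Since `exp_p v = cos ‖v‖ • p + sinc ‖v‖ • v` and both `cos √s` and `sinc √s` are entire power
series in `s`, the map `v ↦ ⟪x, exp_p v⟫` is smooth on all of `H`. For unit vectors with
`exp_p v ≠ -x` its values lie in `(-1, 1]`, and `t ↦ arccos t ^ 2` is smooth on `(-1, 1]`: away from
`1` because `arccos` is, and near `1` (from the left) because there it is the local inverse of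
`s ↦ cos √s`, whose derivative at `0` is `-1/2 ≠ 0`. -/

open MeasureTheory ProbabilityTheory Filter
open scoped InnerProductSpace Topology BigOperators

noncomputable section

variable {H : Type*} [NormedAddCommGroup H] [InnerProductSpace ℝ H]

open FormalMultilinearSeries Set
open scoped Nat ContDiff

lemma radius_ofScalars_eq_top_of_abs_le {c : ℕ → ℝ} (hc : ∀ n, |c n| ≤ (n ! : ℝ)⁻¹) :
    (ofScalars ℝ c).radius = ⊤ := by
  refine radius_eq_top_of_summable_norm _ fun r => ?_
  refine (Real.summable_pow_div_factorial r).of_nonneg_of_le (fun n => by positivity) fun n => ?_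
  rw [ofScalars_norm, Real.norm_eq_abs, div_eq_inv_mul]
  gcongr
  exact hc n

lemma hasFPowerSeriesOnBall_ofScalarsSum_of_abs_le {c : ℕ → ℝ} (hc : ∀ n, |c n| ≤ (n ! : ℝ)⁻¹) :
    HasFPowerSeriesOnBall (ofScalarsSum c) (ofScalars ℝ c) 0 ⊤ := by
  have h := (ofScalars ℝ c).hasFPowerSeriesOnBall (by simp [radius_ofScalars_eq_top_of_abs_le hc])
  rwa [radius_ofScalars_eq_top_of_abs_le hc] at h

lemma analyticOnNhd_ofScalarsSum_of_abs_le {c : ℕ → ℝ} (hc : ∀ n, |c n| ≤ (n ! : ℝ)⁻¹) :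
    AnalyticOnNhd ℝ (ofScalarsSum c : ℝ → ℝ) univ := fun x _ =>
  (hasFPowerSeriesOnBall_ofScalarsSum_of_abs_le hc).analyticAt_of_mem (Metric.mem_eball.2 (by simp))

lemma abs_neg_one_pow_div_factorial_le {m : ℕ} (n : ℕ) (hm : n ≤ m) :
    |(-1) ^ n / (m ! : ℝ)| ≤ (n ! : ℝ)⁻¹ := by
  rw [abs_div, abs_pow, abs_neg, abs_one, one_pow, Nat.abs_cast, one_div]
  gcongr

def cosSqrtCoeff (n : ℕ) : ℝ := (-1) ^ n / (2 * n)!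

def sincSqrtCoeff (n : ℕ) : ℝ := (-1) ^ n / (2 * n + 1)!

def cosSqrt : ℝ → ℝ := ofScalarsSum cosSqrtCoeff

def sincSqrt : ℝ → ℝ := ofScalarsSum sincSqrtCoeff

lemma analyticOnNhd_cosSqrt : AnalyticOnNhd ℝ cosSqrt univ :=
  analyticOnNhd_ofScalarsSum_of_abs_le fun n => abs_neg_one_pow_div_factorial_le n (by omega)

lemma analyticOnNhd_sincSqrt : AnalyticOnNhd ℝ sincSqrt univ :=
  analyticOnNhd_ofScalarsSum_of_abs_le fun n => abs_neg_one_pow_div_factorial_le n (by omega)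

lemma cosSqrt_of_nonneg {s : ℝ} (hs : 0 ≤ s) : cosSqrt s = Real.cos (√s) := by
  rw [cosSqrt, ofScalars_sum_eq, Real.cos_eq_tsum]
  refine tsum_congr fun n => ?_
  rw [smul_eq_mul, cosSqrtCoeff, pow_mul, Real.sq_sqrt hs]
  ring

lemma cosSqrt_sq (y : ℝ) : cosSqrt (y ^ 2) = Real.cos y := by
  rw [cosSqrt_of_nonneg (sq_nonneg y), Real.sqrt_sq_eq_abs, Real.cos_abs]

lemma cosSqrt_zero : cosSqrt 0 = 1 := by
  simpa using cosSqrt_sq 0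

lemma sincSqrt_sq (y : ℝ) : sincSqrt (y ^ 2) = Real.sinc y := by
  rcases eq_or_ne y 0 with rfl | hy
  · simp [sincSqrt, ofScalarsSum_zero, sincSqrtCoeff]
  rw [Real.sinc_of_ne_zero hy, sincSqrt, ofScalars_sum_eq, Real.sin_eq_tsum, ← tsum_div_const]
  refine tsum_congr fun n => ?_
  rw [smul_eq_mul, sincSqrtCoeff, ← pow_mul, pow_succ]
  field_simp

lemma hasStrictDerivAt_cosSqrt_zero : HasStrictDerivAt cosSqrt (-1 / 2) 0 := by
  have h := (hasFPowerSeriesOnBall_ofScalarsSum_of_abs_le (c := cosSqrtCoeff) fun n =>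
    abs_neg_one_pow_div_factorial_le n (by omega)).hasFPowerSeriesAt.hasStrictDerivAt
  have h1 : ofScalars ℝ cosSqrtCoeff 1 (fun _ => 1) = -1 / 2 := by
    norm_num [ofScalars_apply_eq, cosSqrtCoeff]
  rw [h1] at h
  exact h

lemma contDiffWithinAt_arccos_sq_one {n : WithTop ℕ∞} :
    ContDiffWithinAt ℝ n (fun t => Real.arccos t ^ 2) (Iic 1) 1 := by
  have hF : ContDiffAt ℝ ω cosSqrt 0 := analyticOnNhd_cosSqrt.contDiff.contDiffAt
  have hF' := hasStrictDerivAt_cosSqrt_zero.hasDerivAt.hasFDerivAt_equiv (by norm_num)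
  have hω : (ω : WithTop ℕ∞) ≠ 0 := by simp
  set g := hF.localInverse hF' hω
  have hg : ContDiffAt ℝ ω g 1 := by
    simpa [cosSqrt_zero] using hF.to_localInverse hF' hω
  have hg_left : ∀ᶠ s in 𝓝 0, g (cosSqrt s) = s :=
    (hF.hasStrictFDerivAt' hF' hω).eventually_left_inverse
  have harccos : Tendsto (fun t => Real.arccos t ^ 2) (𝓝 1) (𝓝 0) := by
    simpa using (Real.continuous_arccos.tendsto 1).pow 2
  have heq : ∀ᶠ t in 𝓝[Iic 1] 1, Real.arccos t ^ 2 = g t := by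
    filter_upwards [nhdsWithin_le_nhds (harccos.eventually hg_left),
      nhdsWithin_le_nhds (Ioi_mem_nhds (show (-1 : ℝ) < 1 by norm_num)),
      self_mem_nhdsWithin] with t ht hlo hhi
    rwa [cosSqrt_sq, Real.cos_arccos hlo.le hhi, eq_comm] at ht
  refine (hg.contDiffWithinAt.of_le le_top).congr_of_eventuallyEq heq ?_
  simpa [g, cosSqrt_zero] using (hF.localInverse_apply_image hF' hω).symm

lemma contDiffOn_arccos_sq {n : WithTop ℕ∞} :
    ContDiffOn ℝ n (fun t => Real.arccos t ^ 2) (Ioc (-1) 1) := by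
  intro t ⟨hlo, hhi⟩
  rcases hhi.lt_or_eq with hlt | rfl
  · exact ((Real.contDiffAt_arccos hlo.ne' hlt.ne).pow 2).contDiffWithinAt
  · exact contDiffWithinAt_arccos_sq_one.mono Ioc_subset_Iic_self

lemma real_inner_mem_Ioc_of_ne_neg {F : Type*} [NormedAddCommGroup F] [InnerProductSpace ℝ F]
    {x y : F} (hx : ‖x‖ = 1) (hy : ‖y‖ = 1) (hxy : y ≠ -x) : ⟪x, y⟫_ℝ ∈ Ioc (-1) 1 := by
  refine ⟨(neg_one_le_real_inner_of_norm_eq_one hx hy).lt_of_ne fun h => hxy ?_,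
    real_inner_le_one_of_norm_eq_one hx hy⟩
  rw [(inner_eq_neg_one_iff_of_norm_eq_one hx hy).1 h.symm, neg_neg]

lemma expS_eq_cos_smul_add_sinc_smul (p v : H) :
    expS p v = Real.cos ‖v‖ • p + Real.sinc ‖v‖ • v := by
  rcases eq_or_ne v 0 with rfl | hv
  · simp [expS]
  · rw [expS, Real.sinc_of_ne_zero (norm_ne_zero_iff.2 hv)]

lemma norm_expS {p v : H} (hp : ‖p‖ = 1) (hv : ⟪p, v⟫_ℝ = 0) : ‖expS p v‖ = 1 := by
  rcases eq_or_ne v 0 with rfl | hv0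
  · simp [expS, hp]
  have hsq : ‖expS p v‖ ^ 2 = 1 := by
    rw [expS, norm_add_sq_real, real_inner_smul_left, real_inner_smul_right, hv,
      norm_smul, norm_smul, mul_pow, mul_pow, Real.norm_eq_abs, Real.norm_eq_abs, sq_abs, sq_abs,
      hp, div_pow]
    field_simp
    linear_combination ‖v‖ * Real.sin_sq_add_cos_sq ‖v‖
  exact (pow_eq_one_iff_of_nonneg (norm_nonneg _) two_ne_zero).1 hsq

lemma inner_expS (x p v : H) :
    ⟪x, expS p v⟫_ℝ = cosSqrt (‖v‖ ^ 2) * ⟪x, p⟫_ℝ + sincSqrt (‖v‖ ^ 2) * ⟪x, v⟫_ℝ := by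
  rw [expS_eq_cos_smul_add_sinc_smul, inner_add_right, real_inner_smul_right,
    real_inner_smul_right, cosSqrt_sq, sincSqrt_sq]

lemma contDiff_inner_expS (x p : H) {n : WithTop ℕ∞} :
    ContDiff ℝ n fun v : H => ⟪x, expS p v⟫_ℝ := by
  simp_rw [inner_expS]
  have hsq : ContDiff ℝ n fun v : H => ‖v‖ ^ 2 := contDiff_norm_sq ℝ
  exact ((analyticOnNhd_cosSqrt.contDiff.comp hsq).mul contDiff_const).add
    ((analyticOnNhd_sincSqrt.contDiff.comp hsq).mul (contDiff_const.inner ℝ contDiff_id))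

theorem gfun_contDiffOn_general (p x : H) (hp : ‖p‖ = 1) (hx : ‖x‖ = 1) :
    ContDiffOn ℝ 2 (gfun p x)
      {v : Tp p | ‖(v : H)‖ < Real.pi ∧ expS p (v : H) ≠ -x} := by
  refine contDiffOn_arccos_sq.comp
    ((contDiff_inner_expS x p).comp (Tp p).subtypeL.contDiff).contDiffOn fun v hv => ?_
  have hpv : ⟪p, (v : H)⟫_ℝ = 0 := Submodule.mem_orthogonal_singleton_iff_inner_right.1 v.2
  exact real_inner_mem_Ioc_of_ne_neg hx (norm_expS hp hpv) hv.2

/-- `v ↦ ρ(x, exp_p v)²` is twice continuously Fréchet differentiable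
on `{v ∈ T_p : ‖v‖ < π, exp_p v ≠ −x}`. -/
theorem gfun_contDiffOn [CompleteSpace H] (p x : H) (hp : ‖p‖ = 1) (hx : ‖x‖ = 1) :
    ContDiffOn ℝ 2 (gfun p x)
      {v : Tp p | ‖(v : H)‖ < Real.pi ∧ expS p (v : H) ≠ -x} :=
  gfun_contDiffOn_general p x hp hx
end
end
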